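/- arXiv:1910.11186 — 5 statements merged into one kernel-verified Lean document; each statement's English description precedes it below -/
import Mathlib

section
/- Let ẑ ∈ ℝ^b with ẑ ≠ 0, and define cos(z, ẑ) = ⟨z, ẑ⟩/(‖z‖‖ẑ‖) for z ≠ 0, with the convention cos(0, ẑ) = 1. Suppose φ : ℝ^b → ℝ is convex, nonnegative, satisfies φ(0) = 0, and satisfies property (P2): for all z', z'' with ‖z'‖ = ‖z''‖ and cos(z'', ẑ) ≥ cos(z', ẑ), one has φ(z') ≥ φ(z''). Then for all z, z' ∈ ℝ^b with ‖z'‖ ≥ ‖z‖ and cos(z, ẑ) = cos(z', ẑ), one has φ(z') ≥ φ(z). -/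
open RealInnerProductSpace

open Classical in
/-- The cosine of the angle between `z` and `zh`, with the convention that it
equals `1` when `z = 0`. -/
noncomputable def cosAngle {b : ℕ} (z zh : EuclideanSpace ℝ (Fin b)) : ℝ :=
  if z = 0 then 1 else ⟪z, zh⟫ / (‖z‖ * ‖zh‖)

/-! Scaling `z'` down to the norm of `z` keeps its angle with `zh`, so (P2) applied in both
directions gives `φ z = φ (t • z')` with `t = ‖z‖ / ‖z'‖ ≤ 1`; convexity along the segment
from `0` to `z'` together with `φ 0 = 0 ≤ φ z'` bounds this by `t * φ z' ≤ φ z'`. -/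

theorem ConvexOn.map_smul_le_smul_of_map_zero {𝕜 E β : Type*} [Field 𝕜] [LinearOrder 𝕜]
    [IsStrictOrderedRing 𝕜] [AddCommGroup E] [Module 𝕜 E] [AddCommMonoid β] [PartialOrder β]
    [Module 𝕜 β] {s : Set E} {f : E → β} (hf : ConvexOn 𝕜 s f) (h0 : (0 : E) ∈ s)
    (hf0 : f 0 = 0) {x : E} (hx : x ∈ s) {t : 𝕜} (ht0 : 0 ≤ t) (ht1 : t ≤ 1) :
    f (t • x) ≤ t • f x := by
  simpa [hf0] using hf.2 hx h0 ht0 (sub_nonneg.2 ht1) (add_sub_cancel t 1)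

theorem cosAngle_smul_of_pos {b : ℕ} (z zh : EuclideanSpace ℝ (Fin b)) {c : ℝ} (hc : 0 < c) :
    cosAngle (c • z) zh = cosAngle z zh := by
  by_cases hz : z = 0
  · simp [hz]
  simp only [cosAngle, smul_eq_zero, hc.ne', hz, or_self, if_false, inner_smul_left,
    norm_smul, Real.norm_eq_abs, abs_of_pos hc, RCLike.conj_to_real]
  field_simp

theorem stmt_3_general {b : ℕ} (zh : EuclideanSpace ℝ (Fin b))
    (φ : EuclideanSpace ℝ (Fin b) → ℝ)
    (hconv : ConvexOn ℝ Set.univ φ)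
    (hnonneg : ∀ z, 0 ≤ φ z)
    (hzero : φ 0 = 0)
    (hP2 : ∀ z' z'' : EuclideanSpace ℝ (Fin b),
      ‖z'‖ = ‖z''‖ → cosAngle z' zh ≤ cosAngle z'' zh → φ z'' ≤ φ z')
    (z z' : EuclideanSpace ℝ (Fin b))
    (hnorm : ‖z‖ ≤ ‖z'‖)
    (hcos : cosAngle z zh = cosAngle z' zh) :
    φ z ≤ φ z' := by
  by_cases hz : z = 0
  · exact hz ▸ hzero ▸ hnonneg z'
  have hz'_pos : 0 < ‖z'‖ := (norm_pos_iff.2 hz).trans_le hnorm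
  set t := ‖z‖ / ‖z'‖
  have ht_pos : 0 < t := div_pos (norm_pos_iff.2 hz) hz'_pos
  have ht_le_one : t ≤ 1 := div_le_one_of_le₀ hnorm hz'_pos.le
  have hw_norm : ‖t • z'‖ = ‖z‖ := by
    rw [norm_smul, Real.norm_of_nonneg ht_pos.le, div_mul_cancel₀ _ hz'_pos.ne']
  have hw_cos : cosAngle (t • z') zh = cosAngle z zh := by
    rw [cosAngle_smul_of_pos z' zh ht_pos, hcos]
  have hw_eq : φ (t • z') = φ z :=
    le_antisymm (hP2 z _ hw_norm.symm hw_cos.ge) (hP2 _ z hw_norm hw_cos.le)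
  calc φ z = φ (t • z') := hw_eq.symm
    _ ≤ t * φ z' :=
      hconv.map_smul_le_smul_of_map_zero trivial hzero trivial ht_pos.le ht_le_one
    _ ≤ φ z' := mul_le_of_le_one_left (hnonneg z') ht_le_one

theorem stmt_3 {b : ℕ} (zh : EuclideanSpace ℝ (Fin b)) (hzh : zh ≠ 0)
    (φ : EuclideanSpace ℝ (Fin b) → ℝ)
    (hconv : ConvexOn ℝ Set.univ φ)
    (hnonneg : ∀ z, 0 ≤ φ z)
    (hzero : φ 0 = 0)
    (hP2 : ∀ z' z'' : EuclideanSpace ℝ (Fin b),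
      ‖z'‖ = ‖z''‖ → cosAngle z' zh ≤ cosAngle z'' zh → φ z'' ≤ φ z')
    (z z' : EuclideanSpace ℝ (Fin b))
    (hnorm : ‖z‖ ≤ ‖z'‖)
    (hcos : cosAngle z zh = cosAngle z' zh) :
    φ z ≤ φ z' :=
  stmt_3_general zh φ hconv hnonneg hzero hP2 z z' hnorm hcos
end

section
/- Let Φ : ℝ^n → ℝ^p and Γ : ℝ^n → (Fin m → ℝ^b) be linear maps, y ∈ ℝ^p, x̂ ∈ ℝ^n, Î = {i : (Γx̂)_i ≠ 0}, and define η̄ ∈ (Fin m → ℝ^b) by η̄_i = (Γx̂)_i/‖(Γx̂)_i‖₂ for i ∈ Î and η̄_i = 0 for i ∉ Î. Then the set of minimizers of x ↦ (1/2)‖Φx − y‖² over the constraint set {x : ∀ i, ‖(Γx)_i‖₂ − ⟨η̄_i, (Γx)_i⟩ = 0} equals the set of minimizers of x ↦ (1/2)‖Φx − y‖² over the constraint set {x : (∀ i ∉ Î, (Γx)_i = 0) and (∀ i ∈ Î, ∃ α ≥ 0, (Γx)_i = α·(Γx̂)_i)}; indeed the two constraint sets are equal. -/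
/-!
The Bregman divergence `‖v‖ - ⟪η, v⟫` of the norm at a unit vector `η` vanishes exactly in the
equality case of Cauchy–Schwarz, i.e. when `v` is a nonnegative multiple of `η`; at `η = 0` it is
just `‖v‖`. Applied block by block with `η̄_i = (Γx̂)_i / ‖(Γx̂)_i‖`, this identifies the two
constraint sets, and hence the two sets of constrained minimizers.
-/

open RealInnerProductSpace

section BregmanNorm

variable {F : Type*} [NormedAddCommGroup F] [InnerProductSpace ℝ F]

theorem real_inner_eq_norm_mul_iff_sameRay {x y : F} :
    ⟪x, y⟫ = ‖x‖ * ‖y‖ ↔ SameRay ℝ x y := by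
  rw [inner_eq_norm_mul_iff_real, sameRay_iff_norm_smul_eq, eq_comm]

theorem norm_sub_inner_inv_norm_smul_eq_zero_iff {z v : F} (hz : z ≠ 0) :
    ‖v‖ - ⟪‖z‖⁻¹ • z, v⟫ = 0 ↔ ∃ α : ℝ, 0 ≤ α ∧ v = α • z := by
  rw [exists_nonneg_right_iff_sameRay hz, SameRay.sameRay_comm,
    ← real_inner_eq_norm_mul_iff_sameRay, real_inner_smul_left, sub_eq_zero, eq_comm,
    inv_mul_eq_iff_eq_mul₀ (norm_ne_zero_iff.mpr hz)]

theorem norm_sub_inner_eq_zero_iff_nonneg_multiple {η z v : F}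
    (hη1 : z ≠ 0 → η = ‖z‖⁻¹ • z) (hη2 : z = 0 → η = 0) :
    ‖v‖ - ⟪η, v⟫ = 0 ↔ (z = 0 → v = 0) ∧ (z ≠ 0 → ∃ α : ℝ, 0 ≤ α ∧ v = α • z) := by
  by_cases hz : z = 0
  · simp [hz, hη2 hz]
  · simp [hz, hη1 hz, norm_sub_inner_inv_norm_smul_eq_zero_iff hz]

end BregmanNorm

theorem stmt_8 {n p m b : ℕ}
    (Φ : EuclideanSpace ℝ (Fin n) →ₗ[ℝ] EuclideanSpace ℝ (Fin p))
    (Γ : EuclideanSpace ℝ (Fin n) →ₗ[ℝ] (Fin m → EuclideanSpace ℝ (Fin b)))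
    (y : EuclideanSpace ℝ (Fin p)) (xhat : EuclideanSpace ℝ (Fin n))
    (ηbar : Fin m → EuclideanSpace ℝ (Fin b))
    (hη1 : ∀ i, Γ xhat i ≠ 0 → ηbar i = ‖Γ xhat i‖⁻¹ • Γ xhat i)
    (hη2 : ∀ i, Γ xhat i = 0 → ηbar i = 0)
    (S1 S2 : Set (EuclideanSpace ℝ (Fin n)))
    (hS1 : S1 = {x | ∀ i, ‖Γ x i‖ - ⟪ηbar i, Γ x i⟫ = 0})
    (hS2 : S2 = {x | (∀ i, Γ xhat i = 0 → Γ x i = 0) ∧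
      (∀ i, Γ xhat i ≠ 0 → ∃ α : ℝ, 0 ≤ α ∧ Γ x i = α • Γ xhat i)}) :
    S1 = S2 ∧
    {x ∈ S1 | ∀ x' ∈ S1, (1/2) * ‖Φ x - y‖^2 ≤ (1/2) * ‖Φ x' - y‖^2} =
      {x ∈ S2 | ∀ x' ∈ S2, (1/2) * ‖Φ x - y‖^2 ≤ (1/2) * ‖Φ x' - y‖^2} := by
  have hS : S1 = S2 := by
    ext x
    simp only [hS1, hS2, Set.mem_ofPred_eq, ← forall_and,
      norm_sub_inner_eq_zero_iff_nonneg_multiple (hη1 _) (hη2 _)]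
  exact ⟨hS, hS ▸ rfl⟩
end

section
/- Let m, b be positive integers, λ > 0, κ > 0. Let Z ∈ (Fin m → ℝ^b) and set Î = {i : Z_i ≠ 0}; assume Î is nonempty and let α = min_{i ∈ Î} ‖Z_i‖₂ > 0. Let β be such that 0 < β < α·κ. Let ξ ∈ (Fin m → ℝ^b) satisfy ξ_i = λ·Z_i/‖Z_i‖₂ for i ∈ Î and ‖ξ_i‖₂ ≤ λ for i ∉ Î. Suppose (ν^k) is a sequence in (Fin m → ℝ^b) converging to ξ + κ·Z. Then there exists K such that for all k ≥ K, the detected support {i : ‖ν^k_i‖₂ > λ + β} equals Î. -/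
open Filter Topology

theorem stmt_12 {m b : ℕ} (hm : 0 < m) (hb : 0 < b)
    (lam kap : ℝ) (hlam : 0 < lam) (hkap : 0 < kap)
    (Z : Fin m → EuclideanSpace ℝ (Fin b))
    (hne : ∃ i, Z i ≠ 0)
    (α : ℝ) (hα_pos : 0 < α)
    (hα_le : ∀ i, Z i ≠ 0 → α ≤ ‖Z i‖)
    (hα_mem : ∃ i, Z i ≠ 0 ∧ α = ‖Z i‖)
    (β : ℝ) (hβ_pos : 0 < β) (hβ_lt : β < α * kap)
    (ξ : Fin m → EuclideanSpace ℝ (Fin b))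
    (hξ_supp : ∀ i, Z i ≠ 0 → ξ i = (lam / ‖Z i‖) • Z i)
    (hξ_off : ∀ i, Z i = 0 → ‖ξ i‖ ≤ lam)
    (ν : ℕ → Fin m → EuclideanSpace ℝ (Fin b))
    (hν : ∀ i, Tendsto (fun k => ν k i) atTop (𝓝 (ξ i + kap • Z i))) :
    ∃ K : ℕ, ∀ k ≥ K, ∀ i, (lam + β < ‖ν k i‖ ↔ Z i ≠ 0) := by
  set δ : ℝ := min ((α * kap - β) / 2) β with hδdef
  have hδ_pos : 0 < δ := lt_min (by linarith) hβ_pos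
  -- norm of the limit
  have hL : ∀ i, Z i ≠ 0 → ‖ξ i + kap • Z i‖ = lam + kap * ‖Z i‖ := by
    intro i hi
    rw [hξ_supp i hi]
    have hz : (0:ℝ) < ‖Z i‖ := norm_pos_iff.mpr hi
    rw [← add_smul, norm_smul, Real.norm_eq_abs, abs_of_pos (by positivity)]
    field_simp
  have hev : ∀ᶠ k in atTop, ∀ i, ‖ν k i - (ξ i + kap • Z i)‖ < δ := by
    rw [eventually_all]
    intro i
    have := (hν i).sub_const (ξ i + kap • Z i)
    have h2 : Tendsto (fun k => ‖ν k i - (ξ i + kap • Z i)‖) atTop (𝓝 0) := by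
      simpa using this.norm
    exact h2.eventually_lt_const hδ_pos
  obtain ⟨K, hK⟩ := eventually_atTop.mp hev
  refine ⟨K, fun k hk i => ?_⟩
  have hd := hK k hk i
  constructor
  · intro hlt
    by_contra hz
    have hξb : ‖ξ i + kap • Z i‖ ≤ lam := by
      simpa [hz] using hξ_off i hz
    have : ‖ν k i‖ ≤ ‖ξ i + kap • Z i‖ + ‖ν k i - (ξ i + kap • Z i)‖ := by
      have := norm_add_le (ξ i + kap • Z i) (ν k i - (ξ i + kap • Z i))
      simpa using this
    have hδβ : δ ≤ β := min_le_right _ _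
    linarith
  · intro hz
    have hLn := hL i hz
    have hkα : α * kap ≤ kap * ‖Z i‖ := by
      have := hα_le i hz
      nlinarith
    have : ‖ξ i + kap • Z i‖ ≤ ‖ν k i‖ + ‖ν k i - (ξ i + kap • Z i)‖ := by
      have := norm_sub_le (ξ i + kap • Z i) (ν k i)
      have h := norm_add_le (ν k i) ((ξ i + kap • Z i) - ν k i)
      rw [norm_sub_rev (ν k i)]
      simpa using h
    have hδ2 : δ ≤ (α * kap - β) / 2 := min_le_left _ _
    linarith
end

section
/- Let b be a positive integer, λ > 0, and u ∈ ℝ^b with ‖u‖₂ = 1. Define f : ℝ^b → ℝ by f(z) = λ(‖z‖₂ − ⟨z, u⟩). Then for ξ ∈ ℝ^b: (i) if ‖ξ + λu‖₂ ≤ λ, then ⟨ξ, z⟩ − f(z) ≤ 0 for all z ∈ ℝ^b, so the supremum over z of ⟨ξ, z⟩ − f(z) equals 0 (attained at z = 0); (ii) if ‖ξ + λu‖₂ > λ, then the function z ↦ ⟨ξ, z⟩ − f(z) is unbounded above. -/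
open RealInnerProductSpace

theorem stmt_16 {b : ℕ} (hb : 0 < b) (lam : ℝ) (hlam : 0 < lam)
    (u : EuclideanSpace ℝ (Fin b)) (hu : ‖u‖ = 1)
    (ξ : EuclideanSpace ℝ (Fin b)) :
    (‖ξ + lam • u‖ ≤ lam →
      (∀ z : EuclideanSpace ℝ (Fin b), ⟪ξ, z⟫ - lam * (‖z‖ - ⟪z, u⟫) ≤ 0) ∧
      ⟪ξ, (0 : EuclideanSpace ℝ (Fin b))⟫
        - lam * (‖(0 : EuclideanSpace ℝ (Fin b))‖
            - ⟪(0 : EuclideanSpace ℝ (Fin b)), u⟫) = 0) ∧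
    (lam < ‖ξ + lam • u‖ →
      ¬ BddAbove (Set.range fun z : EuclideanSpace ℝ (Fin b) =>
        ⟪ξ, z⟫ - lam * (‖z‖ - ⟪z, u⟫))) := by
  set v : EuclideanSpace ℝ (Fin b) := ξ + lam • u with hv
  have key : ∀ z : EuclideanSpace ℝ (Fin b),
      ⟪ξ, z⟫ - lam * (‖z‖ - ⟪z, u⟫) = ⟪v, z⟫ - lam * ‖z‖ := by
    intro z
    rw [hv, inner_add_left, real_inner_smul_left, real_inner_comm u z]
    ring
  constructor
  · intro hball
    constructor
    · intro z
      rw [key z]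
      have hcs : ⟪v, z⟫ ≤ ‖v‖ * ‖z‖ := real_inner_le_norm v z
      have : ‖v‖ * ‖z‖ ≤ lam * ‖z‖ :=
        mul_le_mul_of_nonneg_right hball (norm_nonneg z)
      linarith
    · simp
  · intro hgt hbdd
    obtain ⟨M, hM⟩ := hbdd
    have hvpos : 0 < ‖v‖ := lt_trans hlam hgt
    have hc : 0 < ‖v‖ * (‖v‖ - lam) := mul_pos hvpos (by linarith)
    obtain ⟨t, ht⟩ := exists_nat_gt (max 0 (M / (‖v‖ * (‖v‖ - lam))))
    have ht0 : (0:ℝ) < t := lt_of_le_of_lt (le_max_left _ _) ht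
    have htM : M / (‖v‖ * (‖v‖ - lam)) < t := lt_of_le_of_lt (le_max_right _ _) ht
    have hmem : ⟪ξ, (t:ℝ) • v⟫ - lam * (‖(t:ℝ) • v‖ - ⟪(t:ℝ) • v, u⟫) ∈
        Set.range fun z : EuclideanSpace ℝ (Fin b) =>
          ⟪ξ, z⟫ - lam * (‖z‖ - ⟪z, u⟫) := ⟨_, rfl⟩
    have hle := hM hmem
    rw [key, real_inner_smul_right, norm_smul, Real.norm_natCast,
      real_inner_self_eq_norm_sq] at hle
    have hval : (t:ℝ) * (‖v‖ * (‖v‖ - lam)) ≤ M := by nlinarith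
    have := (div_lt_iff₀ hc).mp htM
    linarith
end

section
/- Let b be a positive integer, λ > 0, κ > 0, and ẑ ∈ ℝ^b with ẑ ≠ 0. Let P_ẑ(ξ) = ⟨ξ, ẑ/‖ẑ‖₂⟩·ẑ/‖ẑ‖₂ denote the orthogonal projection onto the line spanned by ẑ. Then for every ξ₀ ∈ ℝ^b, the point p = (λ/(λ + κ‖ẑ‖₂))·(ξ₀ − P_ẑ(ξ₀)) is the unique minimizer over the subspace {ξ ∈ ℝ^b : ⟨ξ, ẑ⟩ = 0} of the function ξ ↦ (1/(2κ))‖ξ − ξ₀‖₂² + (‖ẑ‖₂/(2λ))‖ξ‖₂². -/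
/-!
Write `α = 1/(2κ)` and `β = ‖ẑ‖/(2λ)`, so the objective is `α‖ξ - ξ₀‖² + β‖ξ‖²`. Its gradient at `p`
is a multiple of `(α + β) p - α ξ₀`; for `p = α/(α+β) · (ξ₀ - P_ẑ ξ₀)` this vector is parallel
to `ẑ`, hence orthogonal to the constraint subspace, and expanding the square around `p` gives
`g ξ = g p + (α + β)‖ξ - p‖²` on the subspace. Since `α + β > 0`, `p` is the unique minimizer.
-/

open RealInnerProductSpace

section

variable {E : Type*} [NormedAddCommGroup E]

theorem unique_minimizer_of_eq_add_mul_norm_sq {S : Set E} {f : E → ℝ} {p : E} {A : ℝ}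
    (hp : p ∈ S) (hA : 0 < A) (hf : ∀ ξ ∈ S, f ξ = f p + A * ‖ξ - p‖ ^ 2) :
    (∀ ξ ∈ S, f p ≤ f ξ) ∧ ∀ q ∈ S, (∀ ξ ∈ S, f q ≤ f ξ) → q = p := by
  refine ⟨fun ξ hξ => ?_, fun q hq hmin => ?_⟩
  · rw [hf ξ hξ]
    have : 0 ≤ A * ‖ξ - p‖ ^ 2 := by positivity
    linarith
  · have hle : f q ≤ f p := hmin p hp
    rw [hf q hq] at hle
    have hsq : ‖q - p‖ ^ 2 = 0 := by nlinarith [sq_nonneg ‖q - p‖]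
    simpa [sub_eq_zero] using hsq

end

section

variable {E : Type*} [NormedAddCommGroup E] [InnerProductSpace ℝ E]

theorem weighted_norm_sq_add_of_inner_eq_zero (α β : ℝ) (x p d : E)
    (h : ⟪(α + β) • p - α • x, d⟫ = 0) :
    α * ‖p + d - x‖ ^ 2 + β * ‖p + d‖ ^ 2 =
      α * ‖p - x‖ ^ 2 + β * ‖p‖ ^ 2 + (α + β) * ‖d‖ ^ 2 := by
  rw [inner_sub_left, real_inner_smul_left, real_inner_smul_left] at h
  rw [add_sub_right_comm, norm_add_sq_real, norm_add_sq_real, inner_sub_left]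
  linear_combination 2 * h

theorem inner_sub_inner_normalize_smul_eq_zero (x z : E) :
    ⟪x - ⟪x, ‖z‖⁻¹ • z⟫ • (‖z‖⁻¹ • z), z⟫ = 0 := by
  rcases eq_or_ne z 0 with rfl | hz
  · simp
  have hz' : ‖z‖ ≠ 0 := norm_ne_zero_iff.mpr hz
  rw [inner_sub_left, real_inner_smul_left, real_inner_smul_left, real_inner_smul_right,
    real_inner_self_eq_norm_sq]
  field_simp
  ring

theorem weighted_norm_sq_eq_add_on_orthogonal {α β : ℝ} (hαβ : α + β ≠ 0) {x z p ξ : E}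
    (c : ℝ) (hp : p = (α / (α + β)) • (x - c • z)) (hpz : ⟪p, z⟫ = 0) (hξ : ⟪ξ, z⟫ = 0) :
    α * ‖ξ - x‖ ^ 2 + β * ‖ξ‖ ^ 2 =
      α * ‖p - x‖ ^ 2 + β * ‖p‖ ^ 2 + (α + β) * ‖ξ - p‖ ^ 2 := by
  have hgrad : (α + β) • p - α • x = -(α * c) • z := by
    rw [hp, smul_smul, mul_div_cancel₀ _ hαβ, smul_sub, smul_smul, sub_sub_cancel_left, neg_smul]
  have h := weighted_norm_sq_add_of_inner_eq_zero α β x p (ξ - p) (by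
    rw [hgrad, real_inner_smul_left, inner_sub_right, real_inner_comm, hξ, real_inner_comm, hpz]
    ring)
  rwa [add_sub_cancel] at h

end

theorem stmt_19_general {b : ℕ} (lam kap : ℝ) (hlam : 0 < lam) (hkap : 0 < kap)
    (zh : EuclideanSpace ℝ (Fin b))
    (ξ0 : EuclideanSpace ℝ (Fin b))
    (g : EuclideanSpace ℝ (Fin b) → ℝ)
    (hg : ∀ ξ, g ξ = (1 / (2 * kap)) * ‖ξ - ξ0‖^2 + (‖zh‖ / (2 * lam)) * ‖ξ‖^2)
    (pt : EuclideanSpace ℝ (Fin b))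
    (hpt : pt = (lam / (lam + kap * ‖zh‖)) •
      (ξ0 - (⟪ξ0, ‖zh‖⁻¹ • zh⟫) • (‖zh‖⁻¹ • zh))) :
    ⟪pt, zh⟫ = 0 ∧
    (∀ ξ : EuclideanSpace ℝ (Fin b), ⟪ξ, zh⟫ = 0 → g pt ≤ g ξ) ∧
    (∀ q : EuclideanSpace ℝ (Fin b), ⟪q, zh⟫ = 0 →
      (∀ ξ : EuclideanSpace ℝ (Fin b), ⟪ξ, zh⟫ = 0 → g q ≤ g ξ) → q = pt) := by
  set α : ℝ := 1 / (2 * kap)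
  set β : ℝ := ‖zh‖ / (2 * lam)
  have hαβ : 0 < α + β := by positivity
  have hcoeff : lam / (lam + kap * ‖zh‖) = α / (α + β) := by
    simp only [α, β]
    field_simp
  have hptz : ⟪pt, zh⟫ = 0 := by
    rw [hpt, real_inner_smul_left, inner_sub_inner_normalize_smul_eq_zero, mul_zero]
  refine ⟨hptz, unique_minimizer_of_eq_add_mul_norm_sq (S := {ξ | ⟪ξ, zh⟫ = 0}) hptz hαβ ?_⟩
  intro ξ hξ
  rw [smul_smul, hcoeff] at hpt
  rw [hg, hg]
  exact weighted_norm_sq_eq_add_on_orthogonal hαβ.ne' _ hpt hptz hξ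

theorem stmt_19 {b : ℕ} (hb : 0 < b) (lam kap : ℝ) (hlam : 0 < lam) (hkap : 0 < kap)
    (zh : EuclideanSpace ℝ (Fin b)) (hzh : zh ≠ 0)
    (ξ0 : EuclideanSpace ℝ (Fin b))
    (g : EuclideanSpace ℝ (Fin b) → ℝ)
    (hg : ∀ ξ, g ξ = (1 / (2 * kap)) * ‖ξ - ξ0‖^2 + (‖zh‖ / (2 * lam)) * ‖ξ‖^2)
    (pt : EuclideanSpace ℝ (Fin b))
    (hpt : pt = (lam / (lam + kap * ‖zh‖)) •
      (ξ0 - (⟪ξ0, ‖zh‖⁻¹ • zh⟫) • (‖zh‖⁻¹ • zh))) :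
    ⟪pt, zh⟫ = 0 ∧
    (∀ ξ : EuclideanSpace ℝ (Fin b), ⟪ξ, zh⟫ = 0 → g pt ≤ g ξ) ∧
    (∀ q : EuclideanSpace ℝ (Fin b), ⟪q, zh⟫ = 0 →
      (∀ ξ : EuclideanSpace ℝ (Fin b), ⟪ξ, zh⟫ = 0 → g q ≤ g ξ) → q = pt) :=
  stmt_19_general lam kap hlam hkap zh ξ0 g hg pt hpt
end
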